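/- arXiv:1107.1120 — 2 statements merged into one kernel-verified Lean document; each statement's English description precedes it below -/
import Mathlib

section
/- Let u ∈ μ_{q−1} and set f_1(Y) = Y^p + p·Y. Then there exists a polynomial B ∈ O_K[ω_u][X] such that, in L_u[X], f_1(f_1(ω_u·X)) = γ^p·X^{p²} + p·γ·X^p + p²·ω_u·(X − u·X^p) + p³·B(X). (Here one uses γ^{p−1} = −p and ω_u^p = γ − u·p·ω_u.) -/
open Polynomial Filter IntermediateField

variable (p : ℕ) [Fact p.Prime]

/-- A fixed algebraic closure of `ℚ_p`. -/
noncomputable abbrev Qpbar := AlgebraicClosure ℚ_[p]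

/-- The unramified extension `K` of `ℚ_p` of degree `d` inside `ℚ̄_p`, realized as the
splitting field of `X^(p^d - 1) - 1`. -/
noncomputable def Kur (d : ℕ) : IntermediateField ℚ_[p] (Qpbar p) :=
  IntermediateField.adjoin ℚ_[p] {x : Qpbar p | x ^ (p ^ d - 1) = 1}

lemma key {p : ℕ} (hp : p.Prime) (hp3 : 3 ≤ p) {S : Type*} [CommRing S] (a t : S) :
    ∃ E : S, (a + (p:S) * t) ^ p = a ^ p + (p:S)^2 * t * a^(p-1) + (p:S)^3 * E := by
  have hdvd : ((p:S)^3 : S) ∣ ∑ k ∈ Finset.range (p-1),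
      a ^ k * ((p:S)*t) ^ (p - k) * (p.choose k : S) := by
    apply Finset.dvd_sum
    intro k hk
    rw [Finset.mem_range] at hk
    rcases Nat.eq_zero_or_pos k with h0 | h0
    · subst h0
      have h : (p:S)^3 ∣ ((p:S)*t)^(p-0) := by
        rw [Nat.sub_zero, mul_pow]
        exact Dvd.dvd.mul_right (pow_dvd_pow _ hp3) _
      exact (h.mul_left _).mul_right _
    · have h1 : (p:S) ∣ (p.choose k : S) :=
        Nat.cast_dvd_cast (hp.dvd_choose_self h0.ne' (by omega))
      have h2 : (p:S)^2 ∣ ((p:S)*t)^(p-k) := by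
        rw [mul_pow]
        exact Dvd.dvd.mul_right (pow_dvd_pow _ (by omega)) _
      have h3 := (mul_dvd_mul h2 h1).mul_left (a ^ k)
      rw [mul_assoc]
      exact dvd_trans (dvd_of_eq (by ring)) h3
  obtain ⟨E, hE⟩ := hdvd
  refine ⟨E, ?_⟩
  rw [add_pow]
  have h1 : p + 1 = (p-1) + 1 + 1 := by omega
  rw [h1, Finset.sum_range_succ, Finset.sum_range_succ, Nat.sub_add_cancel (by omega : 1 ≤ p)]
  have hch : p.choose (p-1) = p := by
    rw [Nat.choose_symm (by omega : 1 ≤ p), Nat.choose_one_right]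
  rw [hE, hch, Nat.sub_self, Nat.sub_sub_self (by omega : 1 ≤ p), Nat.choose_self]
  push_cast
  ring

set_option maxHeartbeats 1000000 in
set_option synthInstance.maxHeartbeats 400000 in
/-- let `u ∈ μ_{q-1}` and `f₁(Y) = Y^p + p Y`.  Then there is a polynomial
`B` with coefficients in the subring `O_K[ω_u]` of `ℚ̄_p` generated by `O_K` and `ω_u`,
such that `f₁(f₁(ω_u X)) = γ^p X^{p²} + p γ X^p + p² ω_u (X - u X^p) + p³ B(X)`. -/
theorem statement15 (hp : Odd p) (d : ℕ) (hd : 0 < d)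
    (abv : AbsoluteValue (Qpbar p) ℝ)
    (habv : ∀ x : ℚ_[p], abv (algebraMap ℚ_[p] (Qpbar p) x) = ‖x‖)
    (γ : Qpbar p) (hγ : γ ^ (p - 1) = -(p : Qpbar p))
    (u : Qpbar p) (hu : u ^ (p ^ d - 1) = 1)
    (ω : Qpbar p) (hω : ω ^ p + u * p * ω = γ) :
    ∃ B : Polynomial (Qpbar p),
      (∀ i, B.coeff i ∈
        Subring.closure ({x : Qpbar p | x ∈ Kur p d ∧ abv x ≤ 1} ∪ {ω})) ∧
      ((X ^ p + C (p : Qpbar p) * X : Polynomial (Qpbar p)).comp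
          ((X ^ p + C (p : Qpbar p) * X : Polynomial (Qpbar p)).comp (C ω * X)) =
        C (γ ^ p) * X ^ p ^ 2 + C ((p : Qpbar p) * γ) * X ^ p +
          C ((p : Qpbar p) ^ 2 * ω) * (X - C u * X ^ p) + C ((p : Qpbar p) ^ 3) * B) := by
  have hprime : p.Prime := Fact.out
  have hp3 : 3 ≤ p := by
    rcases hprime.eq_two_or_odd with h2 | _
    · exfalso; rw [h2] at hp; exact (Nat.not_odd_iff_even.mpr (by norm_num)) hp
    · rcases Nat.lt_or_ge p 3 with h | h
      · interval_cases p
        · exact absurd hprime (by norm_num)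
        · exact absurd hprime (by norm_num)
        · exfalso; exact (Nat.not_odd_iff_even.mpr (by norm_num)) hp
      · exact h
  set R : Subring (Qpbar p) :=
    Subring.closure ({x : Qpbar p | x ∈ Kur p d ∧ abv x ≤ 1} ∪ {ω}) with hR
  -- memberships
  have hωR : ω ∈ R := Subring.subset_closure (Or.inr rfl)
  have hpR : ((p : ℕ) : Qpbar p) ∈ R := natCast_mem R p
  have hn0 : p ^ d - 1 ≠ 0 := by
    have : 1 < p ^ d := Nat.one_lt_pow (by omega) hprime.one_lt
    omega
  have huR : u ∈ R := by
    apply Subring.subset_closure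
    left
    constructor
    · exact IntermediateField.subset_adjoin _ _ hu
    · have h1 : abv u ^ (p ^ d - 1) = 1 := by
        rw [← map_pow, hu, map_one]
      have := le_of_pow_le_pow_left₀ hn0 (zero_le_one) (by rw [h1, one_pow])
      exact this
  have hγR : γ ∈ R := by
    rw [← hω]
    exact add_mem (pow_mem hωR p) (mul_mem (mul_mem huR (by exact_mod_cast hpR)) hωR)
  -- package elements in R
  set ωR : R := ⟨ω, hωR⟩ with hωRdef
  set uR : R := ⟨u, huR⟩ with huRdef
  set γR : R := ⟨γ, hγR⟩ with hγRdef
  have hωp : ωR ^ p = γR - uR * (p : R) * ωR := by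
    apply Subtype.ext
    push_cast
    linear_combination hω
  have hγ' : γR ^ (p - 1) = -(p : R) := by
    apply Subtype.ext
    push_cast
    linear_combination hγ
  -- work in R[X]
  set a : Polynomial R := C γR * X ^ p with ha
  set T : Polynomial R := C ωR * X - C (uR * ωR) * X ^ p with hT
  obtain ⟨E, hE⟩ := key hprime hp3 a T
  have hA : C (ωR ^ p) * X ^ p + C ((p : R) * ωR) * X = a + (p : Polynomial R) * T := by
    rw [hωp, ha, hT]
    simp only [C_sub, C_mul, C_eq_natCast]
    ring
  set B' : Polynomial R := E - T * X ^ (p * (p - 1)) with hB'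
  have hmain : (C (ωR ^ p) * X ^ p + C ((p : R) * ωR) * X) ^ p
      + (p : Polynomial R) * (C (ωR ^ p) * X ^ p + C ((p : R) * ωR) * X)
      = C (γR ^ p) * X ^ p ^ 2 + C ((p : R) * γR) * X ^ p
        + C ((p : R) ^ 2 * ωR) * (X - C uR * X ^ p) + C ((p : R) ^ 3) * B' := by
    rw [hA, hE, hB', ha, hT]
    have hxp : (X ^ p : Polynomial R) ^ (p - 1) = X ^ (p * (p - 1)) := by
      rw [← pow_mul]
    have hxp2 : (X ^ p : Polynomial R) ^ p = X ^ p ^ 2 := by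
      rw [← pow_mul, pow_two]
    simp only [mul_pow, ← C_pow, hγ', hxp, hxp2]
    simp only [C_mul, C_pow, C_neg, C_eq_natCast]
    ring
  -- map to Qpbar
  set f : R →+* Qpbar p := R.subtype with hf
  refine ⟨B'.map f, ?_, ?_⟩
  · intro i
    rw [coeff_map]
    exact SetLike.coe_mem _
  · have hLHS : ((X ^ p + C (p : Qpbar p) * X : Polynomial (Qpbar p)).comp
          ((X ^ p + C (p : Qpbar p) * X : Polynomial (Qpbar p)).comp (C ω * X)))
        = (C (ω ^ p) * X ^ p + C ((p : Qpbar p) * ω) * X) ^ p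
          + (p : Polynomial (Qpbar p)) * (C (ω ^ p) * X ^ p + C ((p : Qpbar p) * ω) * X) := by
      simp only [add_comp, pow_comp, X_comp, mul_comp, C_comp, natCast_comp, C_mul, C_pow, C_eq_natCast]
      ring
    rw [hLHS]
    have hmap := congrArg (Polynomial.map f) hmain
    have hfω : f ωR = ω := rfl
    have hfu : f uR = u := rfl
    have hfγ : f γR = γ := rfl
    have hfp : f ((p : ℕ) : R) = ((p : ℕ) : Qpbar p) := map_natCast f p
    have hfp2 : Polynomial.map f (((p : ℕ) : Polynomial R)) = ((p : ℕ) : Polynomial (Qpbar p)) :=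
      Polynomial.map_natCast f p
    simp only [hB', Polynomial.map_add, Polynomial.map_mul, Polynomial.map_pow,
      Polynomial.map_sub, hfp2, map_C, map_X, map_pow, map_mul, hfp,
      hfω, hfu, hfγ] at hmap
    simp only [hB', Polynomial.map_sub, Polynomial.map_mul, Polynomial.map_pow,
      map_C, map_X, hfp, hfω, hfu, C_mul, C_pow, C_eq_natCast] at hmap ⊢
    linear_combination hmap
end

section
/- Let u ∈ μ_{p−1} ⊆ ℤ_p^×, f_u(X) = X^p + u·p·X, and let {ω_n}_{n≥0} ⊆ ℚ̄_p be a coherent set of roots for f_u (ω_0 = 0, ω_1 ≠ 0, f_u(ω_n) = ω_{n−1} for n ≥ 1). Then for every n ≥ 1: (i) f_u(u·X) = u·f_u(X); (ii) the polynomial f_u^{∘n}(X)/f_u^{∘(n−1)}(X) (the n-fold composite divided by the (n−1)-fold composite) is Eisenstein over ℤ_p of degree p^{n−1}(p−1) and is the minimal polynomial of ω_n over ℚ_p, and u·ω_n is also a root of it; (iii) there exists a ℚ_p-algebra automorphism φ of ℚ_p(ω_n) with φ(ω_m) = u·ω_m for all 1 ≤ m ≤ n. -/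
/-!
Since `f_u ≡ X ^ p` modulo `p` and `f_u(0) = 0`, every iterate satisfies `f_u^{∘k} ≡ X ^ (p ^ k)`
and vanishes at `0`. Hence `Q = (f_u^{∘(n-1)}) ^ (p - 1) + u p`, the cofactor in
`f_u^{∘n} = Q ⬝ f_u^{∘(n-1)}`, is monic, congruent to a power of `X` and has constant term `u p`:
it is Eisenstein, so irreducible over `ℚ_p`. It kills `ω_n` because `f_u^{∘n}(ω_n) = ω_0 = 0` while
`f_u^{∘(n-1)}(ω_n) = ω_1 ≠ 0`. As `u ^ p = u`, `f_u` and all its iterates commute with `X ↦ u X`,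
so the same computation shows `Q(u ω_n) = 0`. The `ℚ_p`-automorphism of `ℚ_p(ω_n)` sending `ω_n`
to the conjugate `u ω_n` then sends `ω_m = f_u^{∘(n-m)}(ω_n)` to `f_u^{∘(n-m)}(u ω_n) = u ω_m`.
-/

open Polynomial Filter IntermediateField

variable (p : ℕ) [Fact p.Prime]

/-- `n`-fold composite `f^{∘n}` of a polynomial with itself (`f^{∘0} = X`). -/
noncomputable def iterComp (f : Polynomial ℤ_[p]) : ℕ → Polynomial ℤ_[p]
  | 0 => X
  | n + 1 => f.comp (iterComp f n)

section Generic

variable {R : Type*} [CommRing R]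

theorem X_pow_add_C_mul_X_comp {d : ℕ} (hd : 1 ≤ d) (a : R) (g : R[X]) :
    (X ^ d + C a * X).comp g = (g ^ (d - 1) + C a) * g := by
  rw [add_comp, pow_comp, mul_comp, X_comp, C_comp, add_mul, ← pow_succ, Nat.sub_add_cancel hd]

theorem X_pow_add_C_mul_X_comp_C_mul_X {d : ℕ} {u : R} (hu : u ^ d = u) (a : R) :
    (X ^ d + C a * X).comp (C u * X) = C u * (X ^ d + C a * X) := by
  simp only [add_comp, pow_comp, mul_comp, X_comp, C_comp, mul_pow, ← C_pow, hu]
  ring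

theorem monic_X_pow_add_C_mul_X {d : ℕ} (hd : 1 < d) (a : R) : (X ^ d + C a * X).Monic :=
  monic_X_pow_add <| (degree_C_mul_X_le a).trans_lt (by exact_mod_cast hd)

theorem natDegree_X_pow_add_C_mul_X [Nontrivial R] {d : ℕ} (hd : 1 < d) (a : R) :
    (X ^ d + C a * X).natDegree = d := by
  rw [natDegree_add_eq_left_of_degree_lt, natDegree_X_pow]
  exact (degree_C_mul_X_le a).trans_lt (by rw [degree_X_pow]; exact_mod_cast hd)

theorem Polynomial.Monic.isEisensteinAt_of_map_eq_X_pow {P : Ideal R} (hP : P ≠ ⊤) {Q : R[X]}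
    (hQ : Q.Monic) (hmap : Q.map (Ideal.Quotient.mk P) = X ^ Q.natDegree)
    (h0 : Q.coeff 0 ∉ P ^ 2) : Q.IsEisensteinAt P where
  leading := by rwa [hQ.leadingCoeff, ← Ideal.eq_top_iff_one]
  mem {i} hi := by
    rw [← Ideal.Quotient.eq_zero_iff_mem, ← coeff_map, hmap, coeff_X_pow, if_neg hi.ne]
  notMem := h0

theorem mul_notMem_span_singleton_sq [IsDomain R] {π u : R} (hπ : Irreducible π)
    (hu : IsUnit u) : u * π ∉ Ideal.span {π} ^ 2 := by
  rw [Ideal.span_singleton_pow, Ideal.mem_span_singleton, sq,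
    mul_dvd_mul_iff_right hπ.ne_zero]
  exact fun h => hπ.not_isUnit (isUnit_of_dvd_unit h hu)

theorem minpoly_eq_map_of_isEisensteinAt [IsDomain R] [IsIntegrallyClosed R]
    {K L : Type*} [Field K] [Algebra R K] [IsFractionRing R K] [Ring L] [Nontrivial L]
    [Algebra K L] {P : Ideal R} (hP : P.IsPrime) {Q : R[X]} (hQ : Q.Monic) (hdeg : 0 < Q.natDegree)
    (hEis : Q.IsEisensteinAt P) {x : L} (hx : aeval x (Q.map (algebraMap R K)) = 0) :
    minpoly K x = Q.map (algebraMap R K) := by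
  have hirr := hEis.irreducible hP hQ.isPrimitive hdeg
  exact (minpoly.eq_of_irreducible_of_monic
    (hQ.irreducible_iff_irreducible_map_fraction_map.mp hirr) hx (hQ.map _)).symm

end Generic

theorem IntermediateField.exists_algEquiv_adjoin_simple_of_aeval_minpoly_eq_zero
    {F E : Type*} [Field F] [Field E] [Algebra F E] {α β : E} (hα : IsIntegral F α)
    (hβ : β ∈ F⟮α⟯) (hroot : aeval β (minpoly F α) = 0) :
    ∃ φ : F⟮α⟯ ≃ₐ[F] F⟮α⟯, ∀ (P : F[X]) (x : E) (hx : x ∈ F⟮α⟯),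
      aeval α P = x → (φ ⟨x, hx⟩ : E) = aeval β P := by
  have := adjoin.finiteDimensional hα
  let pb := adjoin.powerBasis hα
  have hgen : (pb.gen : E) = α := by simp [pb]
  have hy : aeval (⟨β, hβ⟩ : F⟮α⟯) (minpoly F pb.gen) = 0 := by
    rw [adjoin.powerBasis_gen, minpoly_gen, ← Subtype.coe_inj, ← aeval_coe]
    exact hroot
  let φ := pb.lift _ hy
  refine ⟨AlgEquiv.ofBijective φ φ.bijective, fun P x hx hPx => ?_⟩
  subst hPx
  have hx' : (⟨aeval α P, hx⟩ : F⟮α⟯) = aeval pb.gen P := by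
    rw [← Subtype.coe_inj, ← aeval_coe, hgen]
  rw [hx', AlgEquiv.coe_ofBijective, ← aeval_algHom_apply, pb.lift_gen, ← aeval_coe]

section IterComp

variable {p}

theorem iterComp_succ (f : ℤ_[p][X]) (k : ℕ) : iterComp p f (k + 1) = f.comp (iterComp p f k) :=
  rfl

theorem natDegree_iterComp (f : ℤ_[p][X]) (k : ℕ) :
    (iterComp p f k).natDegree = f.natDegree ^ k := by
  induction k with
  | zero => simp [iterComp]
  | succ k ih => rw [iterComp_succ, natDegree_comp, ih, pow_succ, mul_comm]

theorem monic_iterComp {f : ℤ_[p][X]} (hf : f.Monic) (hd : f.natDegree ≠ 0) (k : ℕ) :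
    (iterComp p f k).Monic := by
  induction k with
  | zero => exact monic_X
  | succ k ih => exact hf.comp ih (by rw [natDegree_iterComp]; exact pow_ne_zero k hd)

theorem map_iterComp {S : Type*} [CommRing S] (φ : ℤ_[p] →+* S) {f : ℤ_[p][X]} {d : ℕ}
    (hf : f.map φ = X ^ d) (k : ℕ) : (iterComp p f k).map φ = X ^ (d ^ k) := by
  induction k with
  | zero => simp [iterComp]
  | succ k ih => rw [iterComp_succ, Polynomial.map_comp, hf, ih, X_pow_comp, ← pow_mul, pow_succ]

theorem eval_zero_iterComp {f : ℤ_[p][X]} (hf : f.eval 0 = 0) (k : ℕ) :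
    (iterComp p f k).eval 0 = 0 := by
  induction k with
  | zero => simp [iterComp]
  | succ k ih => rw [iterComp_succ, eval_comp, ih, hf]

theorem iterComp_comp_C_mul_X {f : ℤ_[p][X]} {u : ℤ_[p]} (hf : f.comp (C u * X) = C u * f)
    (k : ℕ) : (iterComp p f k).comp (C u * X) = C u * iterComp p f k := by
  induction k with
  | zero => simp [iterComp]
  | succ k ih =>
    have hg : C u * iterComp p f k = (C u * X).comp (iterComp p f k) := by simp
    rw [iterComp_succ, comp_assoc, ih, hg, ← comp_assoc, hf, mul_comp, C_comp]

variable {B : Type*} [CommRing B] [Algebra ℤ_[p] B]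

theorem aeval_smul_iterComp {f : ℤ_[p][X]} {u : ℤ_[p]} (hf : f.comp (C u * X) = C u * f)
    (k : ℕ) (x : B) :
    aeval (algebraMap ℤ_[p] B u * x) (iterComp p f k) =
      algebraMap ℤ_[p] B u * aeval x (iterComp p f k) := by
  have h := congrArg (aeval x) (iterComp_comp_C_mul_X hf k)
  simpa only [aeval_comp, map_mul, aeval_C, aeval_X] using h

theorem aeval_iterComp_sub_of_coherent {f : ℤ_[p][X]} {ω : ℕ → B}
    (hω : ∀ i, aeval (ω (i + 1)) f = ω i) {m n : ℕ} (hmn : m ≤ n) :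
    aeval (ω n) (iterComp p f (n - m)) = ω m := by
  obtain ⟨k, rfl⟩ := Nat.exists_eq_add_of_le hmn
  rw [Nat.add_sub_cancel_left]
  clear hmn
  induction k generalizing m with
  | zero => simp [iterComp]
  | succ k ih => rw [iterComp_succ, aeval_comp, ← add_assoc, Nat.add_right_comm, ih, hω]

end IterComp

section LubinTate

variable {p}

noncomputable def lubinTateQuot (u : ℤ_[p]) (k : ℕ) : ℤ_[p][X] :=
  iterComp p (X ^ p + C (u * p) * X) k ^ (p - 1) + C (u * p)

theorem iterComp_succ_eq_lubinTateQuot_mul (u : ℤ_[p]) (k : ℕ) :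
    iterComp p (X ^ p + C (u * p) * X) (k + 1) =
      lubinTateQuot u k * iterComp p (X ^ p + C (u * p) * X) k :=
  X_pow_add_C_mul_X_comp (Fact.out : p.Prime).one_le _ _

theorem natDegree_lubinTateQuot (u : ℤ_[p]) (k : ℕ) :
    (lubinTateQuot u k).natDegree = p ^ k * (p - 1) := by
  rw [lubinTateQuot, natDegree_add_C, natDegree_pow, natDegree_iterComp,
    natDegree_X_pow_add_C_mul_X (Fact.out : p.Prime).one_lt, mul_comm]

theorem monic_lubinTateQuot (u : ℤ_[p]) (k : ℕ) : (lubinTateQuot u k).Monic := by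
  have hp := (Fact.out : p.Prime).one_lt
  have hg := monic_iterComp (monic_X_pow_add_C_mul_X hp (u * p))
    (by rw [natDegree_X_pow_add_C_mul_X hp]; omega) k
  refine (hg.pow (p - 1)).add_of_left (degree_C_le.trans_lt ?_)
  rw [← natDegree_pos_iff_degree_pos, natDegree_pow, natDegree_iterComp,
    natDegree_X_pow_add_C_mul_X hp]
  exact Nat.mul_pos (by omega) (by positivity)

theorem isEisensteinAt_lubinTateQuot {u : ℤ_[p]} (hu : IsUnit u) (k : ℕ) :
    (lubinTateQuot u k).IsEisensteinAt (Ideal.span {(p : ℤ_[p])}) := by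
  have hup : Ideal.Quotient.mk (Ideal.span {(p : ℤ_[p])}) (u * p) = 0 :=
    Ideal.Quotient.eq_zero_iff_mem.mpr (Ideal.mem_span_singleton.mpr (dvd_mul_left _ _))
  have hmap : (X ^ p + C (u * p) * X).map (Ideal.Quotient.mk (Ideal.span {(p : ℤ_[p])})) =
      X ^ p := by
    simp only [Polynomial.map_add, Polynomial.map_pow, Polynomial.map_mul, map_X, map_C, hup,
      map_zero, zero_mul, add_zero]
  have heval : (X ^ p + C (u * p) * X).eval 0 = 0 := by simp [(Fact.out : p.Prime).ne_zero]
  refine (monic_lubinTateQuot u k).isEisensteinAt_of_map_eq_X_pow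
    (by simpa [Ideal.span_singleton_eq_top] using PadicInt.irreducible_p.not_isUnit) ?_ ?_
  · rw [natDegree_lubinTateQuot, lubinTateQuot, Polynomial.map_add, Polynomial.map_pow,
      map_iterComp _ hmap, map_C, hup, map_zero, add_zero, ← pow_mul]
  · rw [lubinTateQuot, coeff_zero_eq_eval_zero, eval_add, eval_pow, eval_zero_iterComp heval,
      eval_C, zero_pow (by have := (Fact.out : p.Prime).one_lt; omega), zero_add]
    exact mul_notMem_span_singleton_sq PadicInt.irreducible_p hu

variable {B : Type*} [CommRing B] [IsDomain B] [Algebra ℤ_[p] B]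

theorem aeval_lubinTateQuot_eq_zero {u : ℤ_[p]} {k : ℕ} {x : B}
    (h0 : aeval x (iterComp p (X ^ p + C (u * p) * X) (k + 1)) = 0)
    (h1 : aeval x (iterComp p (X ^ p + C (u * p) * X) k) ≠ 0) :
    aeval x (lubinTateQuot u k) = 0 := by
  rw [iterComp_succ_eq_lubinTateQuot_mul, map_mul] at h0
  exact (mul_eq_zero.mp h0).resolve_right h1

theorem aeval_lubinTateQuot_smul_of_coherent {u c : ℤ_[p]} {ω : ℕ → B}
    (hω : ∀ i, aeval (ω (i + 1)) (X ^ p + C (u * p) * X) = ω i) (hω0 : ω 0 = 0) (hω1 : ω 1 ≠ 0)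
    (hc : IsUnit (algebraMap ℤ_[p] B c))
    (hfc : (X ^ p + C (u * p) * X).comp (C c * X) = C c * (X ^ p + C (u * p) * X)) (k : ℕ) :
    aeval (algebraMap ℤ_[p] B c * ω (k + 1)) (lubinTateQuot u k) = 0 := by
  have h0 := aeval_iterComp_sub_of_coherent hω (Nat.zero_le (k + 1))
  have h1 := aeval_iterComp_sub_of_coherent hω (Nat.le_add_left 1 k)
  rw [Nat.sub_zero, hω0] at h0
  rw [Nat.add_sub_cancel] at h1
  refine aeval_lubinTateQuot_eq_zero ?_ ?_ <;> rw [aeval_smul_iterComp hfc]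
  · rw [h0, mul_zero]
  · rw [h1]
    exact mul_ne_zero hc.ne_zero hω1

theorem minpoly_eq_map_lubinTateQuot_of_coherent {L : Type*} [Field L] [Algebra ℚ_[p] L]
    [Algebra ℤ_[p] L] [IsScalarTower ℤ_[p] ℚ_[p] L] {u : ℤ_[p]} (hu : IsUnit u) {ω : ℕ → L}
    (hω : ∀ i, aeval (ω (i + 1)) (X ^ p + C (u * p) * X) = ω i) (hω0 : ω 0 = 0) (hω1 : ω 1 ≠ 0)
    (k : ℕ) : minpoly ℚ_[p] (ω (k + 1)) = (lubinTateQuot u k).map (algebraMap ℤ_[p] ℚ_[p]) := by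
  have hp := (Fact.out : p.Prime).one_lt
  refine minpoly_eq_map_of_isEisensteinAt
    ((Ideal.span_singleton_prime PadicInt.irreducible_p.ne_zero).mpr PadicInt.prime_p)
    (monic_lubinTateQuot u k)
    (by rw [natDegree_lubinTateQuot]; exact Nat.mul_pos (by positivity) (by omega))
    (isEisensteinAt_lubinTateQuot hu k) ?_
  simpa [aeval_map_algebraMap] using
    aeval_lubinTateQuot_smul_of_coherent (c := 1) hω hω0 hω1 (by simp) (by simp) k

end LubinTate

theorem statement18
    (u : ℤ_[p]) (hu : u ^ (p - 1) = 1)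
    (ω : ℕ → Qpbar p)
    (hω0 : ω 0 = 0) (hω1 : ω 1 ≠ 0)
    (hωc : ∀ i : ℕ, 1 ≤ i →
      Polynomial.aeval (ω i)
        ((X ^ p + C (u * p) * X : Polynomial ℤ_[p]).map (algebraMap ℤ_[p] ℚ_[p])) =
        ω (i - 1)) :
    ((X ^ p + C (u * p) * X : Polynomial ℤ_[p]).comp (C u * X) =
      C u * (X ^ p + C (u * p) * X)) ∧
    (∀ n : ℕ, 1 ≤ n →
      ∃ Q : Polynomial ℤ_[p],
        iterComp p (X ^ p + C (u * p) * X) n =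
          Q * iterComp p (X ^ p + C (u * p) * X) (n - 1) ∧
        Q.natDegree = p ^ (n - 1) * (p - 1) ∧
        Q.IsEisensteinAt (Ideal.span {(p : ℤ_[p])}) ∧
        minpoly ℚ_[p] (ω n) = Q.map (algebraMap ℤ_[p] ℚ_[p]) ∧
        Polynomial.aeval (algebraMap ℚ_[p] (Qpbar p) (u : ℚ_[p]) * ω n)
          (Q.map (algebraMap ℤ_[p] ℚ_[p])) = 0) ∧
    (∀ n : ℕ, 1 ≤ n →
      ∃ φ : IntermediateField.adjoin ℚ_[p] {ω n} ≃ₐ[ℚ_[p]]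
          IntermediateField.adjoin ℚ_[p] {ω n},
        ∀ m : ℕ, 1 ≤ m → m ≤ n →
          ∀ h : ω m ∈ IntermediateField.adjoin ℚ_[p] {ω n},
            (↑(φ ⟨ω m, h⟩) : Qpbar p) =
              algebraMap ℚ_[p] (Qpbar p) (u : ℚ_[p]) * ω m) := by
  have hp := (Fact.out : p.Prime).one_lt
  have hpu : u ^ p = u := by
    calc u ^ p = u ^ (p - 1) * u := by rw [← pow_succ, Nat.sub_add_cancel hp.le]
      _ = u := by rw [hu, one_mul]
  have hunit : IsUnit u := IsUnit.of_pow_eq_one hu (by omega)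
  have hfu := X_pow_add_C_mul_X_comp_C_mul_X hpu (u * p)
  have hω : ∀ i, aeval (ω (i + 1)) (X ^ p + C (u * p) * X) = ω i := fun i => by
    simpa only [aeval_map_algebraMap, Nat.add_sub_cancel] using hωc (i + 1) le_add_self
  have hA : algebraMap ℚ_[p] (Qpbar p) u = algebraMap ℤ_[p] (Qpbar p) u :=
    (IsScalarTower.algebraMap_apply ℤ_[p] ℚ_[p] (Qpbar p) u).symm
  have hroot := aeval_lubinTateQuot_smul_of_coherent hω hω0 hω1 (hunit.map _) hfu
  have hmin := minpoly_eq_map_lubinTateQuot_of_coherent hunit hω hω0 hω1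
  refine ⟨hfu, fun n hn => ?_, fun n hn => ?_⟩ <;> obtain ⟨k, rfl⟩ := Nat.exists_eq_add_of_le' hn
  · refine ⟨lubinTateQuot u k, iterComp_succ_eq_lubinTateQuot_mul u k,
      natDegree_lubinTateQuot u k, isEisensteinAt_lubinTateQuot hunit k, hmin k, ?_⟩
    rw [hA, aeval_map_algebraMap]
    exact hroot k
  · obtain ⟨φ, hφ⟩ := exists_algEquiv_adjoin_simple_of_aeval_minpoly_eq_zero
      (Algebra.IsIntegral.isIntegral (ω (k + 1)))
      (mul_mem (IntermediateField.algebraMap_mem _ _) (mem_adjoin_simple_self _ _))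
      (by rw [hmin, aeval_map_algebraMap, hA]; exact hroot k)
    refine ⟨φ, fun m _ hmn h => ?_⟩
    have hωm := aeval_iterComp_sub_of_coherent hω hmn
    rw [hφ ((iterComp p _ (k + 1 - m)).map (algebraMap ℤ_[p] ℚ_[p])) (ω m) h
      (by rwa [aeval_map_algebraMap]), aeval_map_algebraMap, hA, aeval_smul_iterComp hfu, hωm]
end
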